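/- arXiv:0704.2169 — 2 statements merged into one kernel-verified Lean document; each statement's English description precedes it below -/
import Mathlib

section
/- Let g : ℝ → ℝ be a continuous monotone non-decreasing function, a₀ ∈ ℝ, and s₁ ∈ ℝ. Suppose a : [s₁, ∞) → ℝ is differentiable, satisfies the ODE a'(s) = g(a(s)) − g(a₀) for all s ≥ s₁, and satisfies lim_{s→∞} a(s) = a₀. Then a(s) = a₀ for all s ≥ s₁. -/
/-- Rigidity for a scalar ODE with monotone right-hand side: if
`a'(s) = g(a(s)) − g(a₀)` on `[s₁, ∞)` with `g` continuous and monotone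
non-decreasing, and `a(s) → a₀` as `s → ∞`, then `a ≡ a₀` on `[s₁, ∞)`. -/
theorem ode_monotone_rigidity
    (g : ℝ → ℝ) (hg : Continuous g) (hmono : Monotone g)
    (a₀ s₁ : ℝ) (a : ℝ → ℝ)
    (hdiff : ∀ s ∈ Set.Ici s₁, DifferentiableAt ℝ a s)
    (hode : ∀ s ∈ Set.Ici s₁, deriv a s = g (a s) - g a₀)
    (hlim : Filter.Tendsto a Filter.atTop (nhds a₀)) :
    ∀ s ∈ Set.Ici s₁, a s = a₀ := by
  set f : ℝ → ℝ := fun s => (a s - a₀) ^ 2 with hf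
  have hfd : ∀ s ∈ Set.Ici s₁, HasDerivAt f (2 * (a s - a₀) * deriv a s) s := by
    intro s hs
    have h := (((hdiff s hs).hasDerivAt).sub_const a₀).pow 2
    simpa [mul_comm, mul_assoc, mul_left_comm, Pi.pow_def] using h
  have hderiv_nonneg : ∀ s ∈ Set.Ici s₁, 0 ≤ deriv f s := by
    intro s hs
    rw [(hfd s hs).deriv, hode s hs]
    have key : 0 ≤ (a s - a₀) * (g (a s) - g a₀) := by
      rcases le_total a₀ (a s) with h | h
      · exact mul_nonneg (by linarith) (by linarith [hmono h])
      · nlinarith [hmono h]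
    nlinarith
  have hmonof : MonotoneOn f (Set.Ici s₁) := by
    refine monotoneOn_of_deriv_nonneg (convex_Ici s₁) ?_ ?_ ?_
    · exact fun s hs => ((hfd s hs).continuousAt).continuousWithinAt
    · intro s hs
      rw [interior_Ici] at hs
      exact ((hfd s (Set.Ioi_subset_Ici_self hs)).differentiableAt).differentiableWithinAt
    · intro s hs
      rw [interior_Ici] at hs
      exact hderiv_nonneg s (Set.Ioi_subset_Ici_self hs)
  have hflim : Filter.Tendsto f Filter.atTop (nhds 0) := by
    have : Filter.Tendsto (fun s => a s - a₀) Filter.atTop (nhds 0) := by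
      simpa using hlim.sub_const a₀
    simpa using this.pow 2
  intro s hs
  have hle : f s ≤ 0 := by
    refine ge_of_tendsto hflim ?_
    filter_upwards [Filter.eventually_ge_atTop s, Filter.eventually_ge_atTop s₁]
      with t hts ht1
    exact hmonof hs ht1 hts
  have := sq_nonneg (a s - a₀)
  have : (a s - a₀) ^ 2 = 0 := le_antisymm hle this
  have := pow_eq_zero_iff (n := 2) (by norm_num) |>.mp this
  linarith [sub_eq_zero.mp this]
end

section
/- Let (V_j)_{j∈ℤ} be finite-dimensional ℚ-vector spaces such that V_j = 0 for all but finitely many j. For each k ∈ ℤ set B_k := ⊕_{m≥0} V_{k−2m} and C_k := ⊕_{m≥1} V_{k−2m} (finite direct sums). Suppose given a long exact sequence of ℚ-vector spaces … → V_k →^{i_k} B_k →^{p_k} C_k →^{δ_k} V_{k−1} →^{i_{k−1}} B_{k−1} → … . Then δ_k = 0 for every k; equivalently, every i_k is injective and every p_k is surjective, so the long exact sequence splits into short exact sequences 0 → V_k → B_k → C_k → 0. -/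
open DirectSum Module

section aux
variable (W : ℕ → Type*) [∀ m, AddCommGroup (W m)] [∀ m, Module ℚ (W m)]

/-- Equivalence with a finite truncation when the tail is trivial. -/
noncomputable def truncEquiv (M : ℕ) (hW : ∀ m, M ≤ m → Subsingleton (W m)) :
    (⨁ m : ℕ, W m) ≃ₗ[ℚ] ⨁ j : Fin M, W ↑j := by
  refine LinearEquiv.ofLinear
    (DirectSum.toModule ℚ ℕ _ (fun m =>
      if h : m < M then DirectSum.lof ℚ (Fin M) (fun j => W ↑j) ⟨m, h⟩ else 0))
    (DirectSum.toModule ℚ (Fin M) _ (fun j => DirectSum.lof ℚ ℕ W ↑j)) ?_ ?_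
  · apply DirectSum.linearMap_ext
    intro j
    ext x
    simp [DirectSum.toModule_lof, j.isLt]
  · apply DirectSum.linearMap_ext
    intro m
    ext x
    by_cases h : m < M
    · simp [DirectSum.toModule_lof, h]
    · have := hW m (le_of_not_gt h)
      have hx : x = 0 := Subsingleton.elim x 0
      simp [hx]

variable [∀ m, FiniteDimensional ℚ (W m)]

lemma trunc_fin (M : ℕ) (hW : ∀ m, M ≤ m → Subsingleton (W m)) :
    FiniteDimensional ℚ (⨁ m : ℕ, W m) := by
  have : Module.Finite ℚ (⨁ j : Fin M, W ↑j) :=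
    Module.Finite.equiv (DirectSum.linearEquivFunOnFintype ℚ _ _).symm
  exact Module.Finite.equiv (truncEquiv W M hW).symm

lemma trunc_finrank (M : ℕ) (hW : ∀ m, M ≤ m → Subsingleton (W m)) :
    finrank ℚ (⨁ m : ℕ, W m) = ∑ m ∈ Finset.range M, finrank ℚ (W m) := by
  rw [(truncEquiv W M hW).finrank_eq, finrank_directSum]
  rw [Finset.sum_range fun m => finrank ℚ (W m)]

end aux

/-- If `(V_j)` are finite-dimensional `ℚ`-vector spaces, all but finitely many
trivial, `B_k = ⊕_{m≥0} V_{k−2m}`, `C_k = ⊕_{m≥1} V_{k−2m}`, and there is a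
long exact sequence `… → V_k → B_k → C_k → V_{k−1} → …`, then all connecting
maps `δ_k : C_k → V_{k−1}` vanish, every `i_k` is injective and every `p_k` is
surjective. -/
theorem long_exact_sequence_splits
    (V : ℤ → Type*) [∀ j, AddCommGroup (V j)] [∀ j, Module ℚ (V j)]
    [∀ j, FiniteDimensional ℚ (V j)]
    (hsupp : {j : ℤ | ¬ Subsingleton (V j)}.Finite)
    (i : ∀ k : ℤ, V k →ₗ[ℚ] (⨁ m : ℕ, V (k - 2 * (m : ℤ))))
    (p : ∀ k : ℤ, (⨁ m : ℕ, V (k - 2 * (m : ℤ))) →ₗ[ℚ]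
      (⨁ m : ℕ, V (k - 2 * ((m : ℤ) + 1))))
    (δ : ∀ k : ℤ, (⨁ m : ℕ, V (k - 2 * ((m : ℤ) + 1))) →ₗ[ℚ] V (k - 1))
    (hexact₁ : ∀ k, Function.Exact (i k) (p k))
    (hexact₂ : ∀ k, Function.Exact (p k) (δ k))
    (hexact₃ : ∀ k, Function.Exact (δ k) (i (k - 1))) :
    (∀ k, δ k = 0) ∧ (∀ k, Function.Injective (i k)) ∧
    (∀ k, Function.Surjective (p k)) := by
  classical
  obtain ⟨N, hN⟩ : ∃ N : ℤ, ∀ j < N, Subsingleton (V j) := by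
    obtain ⟨N, hN⟩ := hsupp.bddBelow
    exact ⟨N, fun j hj => not_not.mp fun h => absurd (hN h) (by omega)⟩
  set MB : ℤ → ℕ := fun k => (k - N).toNat + 1 with hMB
  have hB : ∀ (k : ℤ) (m : ℕ), MB k ≤ m → Subsingleton (V (k - 2 * (m : ℤ))) := by
    intro k m hm
    exact hN _ (by simp only [hMB] at hm; omega)
  have hC : ∀ (k : ℤ) (m : ℕ), MB k ≤ m → Subsingleton (V (k - 2 * ((m : ℤ) + 1))) := by
    intro k m hm
    exact hN _ (by simp only [hMB] at hm; omega)
  have iB : ∀ k : ℤ, FiniteDimensional ℚ (⨁ m : ℕ, V (k - 2 * (m : ℤ))) :=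
    fun k => trunc_fin _ (MB k) (hB k)
  have iC : ∀ k : ℤ, FiniteDimensional ℚ (⨁ m : ℕ, V (k - 2 * ((m : ℤ) + 1))) :=
    fun k => trunc_fin _ (MB k) (hC k)
  have hdim : ∀ k : ℤ, finrank ℚ (⨁ m : ℕ, V (k - 2 * (m : ℤ)))
      = finrank ℚ (V k) + finrank ℚ (⨁ m : ℕ, V (k - 2 * ((m : ℤ) + 1))) := by
    intro k
    rw [trunc_finrank _ (MB k + 1) (fun m hm => hB k m (by omega)),
      trunc_finrank _ (MB k) (hC k), Finset.sum_range_succ']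
    have e0 : k - 2 * ((0 : ℕ) : ℤ) = k := by norm_num
    rw [e0, add_comm]
    congr 1
  have hδ0 : ∀ k, δ k = 0 := by
    intro k
    haveI := iB (k - 1); haveI := iC (k - 1); haveI := iC k
    have e1 := (hexact₃ k).linearMap_ker_eq
    have e2 := (hexact₁ (k - 1)).linearMap_ker_eq
    have e3 := (hexact₂ (k - 1)).linearMap_ker_eq
    have a1 := LinearMap.finrank_range_add_finrank_ker (i (k - 1))
    have a2 := LinearMap.finrank_range_add_finrank_ker (p (k - 1))
    have a3 := LinearMap.finrank_range_add_finrank_ker (δ (k - 1))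
    rw [e1] at a1; rw [e2] at a2; rw [e3] at a3
    have hd := hdim (k - 1)
    have hr : finrank ℚ (LinearMap.range (δ k)) = 0 := by omega
    have hbot : LinearMap.range (δ k) = ⊥ := Submodule.finrank_eq_zero.mp hr
    exact LinearMap.range_eq_bot.mp hbot
  refine ⟨hδ0, fun k => ?_, fun k => ?_⟩
  · have h := (hexact₃ (k + 1)).linearMap_ker_eq
    rw [hδ0 (k + 1), LinearMap.range_zero] at h
    have h2 : Function.Injective (i (k + 1 - 1)) := LinearMap.ker_eq_bot.mp h
    have e : k + 1 - 1 = k := by ring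
    exact e ▸ h2
  · have h := (hexact₂ k).linearMap_ker_eq
    rw [hδ0 k, LinearMap.ker_zero] at h
    exact LinearMap.range_eq_top.mp h.symm
end
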